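/- Let α ∈ R_+, j > 0, and α̃ = [α, ν_α j] ∈ R̃_+; fix ⋄ ∈ {sht,lng}. Then λ_{ν_⋄}(s_α̃) is the union of the following three sets: (a) {[α, ν_α k] : 0 ≤ k ≤ 2j} if ν_α = ν_⋄, and the empty set otherwise; (b) all β̃ = [β, ν_β k] ∈ R̃_+ with β ∈ R, β ≠ α, ν_β = ν_⋄, (α,β) > 0 and 0 ≤ ν_β k < (α,β)j; (c) all [β, (α,β)j] with β ∈ R, β ≠ α, ν_β = ν_⋄, (α,β) > 0 such that β ∈ R_− or β ∈ λ(s_α). Consequently l_⋄(s_α̃) = l_⋄(jα) + l_⋄(s_α), where jα = s_α s_α̃ ∈ Ŵ is the translation by the weight jα. -/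

import Mathlib

open scoped RealInnerProductSpace Classical

noncomputable section

/-- Euclidean space ℝⁿ. -/
abbrev EV (n : ℕ) := EuclideanSpace ℝ (Fin n)

/-- ν_α = (α,α)/2. -/
def nuu {n : ℕ} (α : EV n) : ℝ := ⟪α, α⟫ / 2

/-- α^∨ = 2α/(α,α). -/
def coroot {n : ℕ} (α : EV n) : EV n := (2 / ⟪α, α⟫) • α

/-- the reflection s_α. -/
def srefl {n : ℕ} (α : EV n) : EV n → EV n :=
  fun z => z - (2 * ⟪z, α⟫ / ⟪α, α⟫) • α

/-- the affine reflection s_ã attached to ã = [α, ν_α j], acting linearly on ℝⁿ × ℝ. -/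
def aRefl {n : ℕ} (p : EV n × ℝ) : EV n × ℝ → EV n × ℝ :=
  fun z => z - (2 * ⟪z.1, p.1⟫ / ⟪p.1, p.1⟫) • p

/-- the translation element b' ∈ Ŵ, b'([z,ζ]) = [z, ζ − (z,b)]. -/
def transl {n : ℕ} (b : EV n) : EV n × ℝ → EV n × ℝ :=
  fun z => (z.1, z.2 - ⟪z.1, b⟫)

/-- extension of a nonaffine transformation to ℝⁿ × ℝ. -/
def affExt {n : ℕ} (w : EV n → EV n) : EV n × ℝ → EV n × ℝ :=
  fun z => (w z.1, z.2)

/-- An irreducible reduced crystallographic root system in ℝⁿ, with a fixed system of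
positive/simple roots, normalized so that (α,α) = 2 for short roots; `hishort` is the
highest short root ϑ and `hiroot` the highest root θ. -/
structure RootCtx (n : ℕ) where
  R : Finset (EV n)
  pos : Finset (EV n)
  simple : Fin n → EV n
  hishort : EV n
  hiroot : EV n
  nonzero : ∀ α ∈ R, α ≠ (0 : EV n)
  neg_mem : ∀ α ∈ R, -α ∈ R
  reduced : ∀ α ∈ R, ∀ t : ℝ, t • α ∈ R → t = 1 ∨ t = -1
  crys : ∀ α ∈ R, ∀ β ∈ R, ∃ m : ℤ, 2 * ⟪β, α⟫ / ⟪α, α⟫ = (m : ℝ)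
  reflect_mem : ∀ α ∈ R, ∀ β ∈ R, β - (2 * ⟪β, α⟫ / ⟪α, α⟫) • α ∈ R
  span_top : Submodule.span ℝ (R : Set (EV n)) = ⊤
  pos_subset : pos ⊆ R
  pos_iff : ∀ α ∈ R, (α ∈ pos ↔ -α ∉ pos)
  simple_pos : ∀ i, simple i ∈ pos
  simple_inj : Function.Injective simple
  pos_sum : ∀ α ∈ pos, ∃ f : Fin n → ℕ, α = ∑ i, (f i : ℝ) • simple i
  irred : ∀ S : Finset (EV n), S ⊆ R → S.Nonempty →
      (∀ α ∈ S, ∀ β ∈ R, β ∉ S → ⟪α, β⟫ = 0) → S = R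
  normalized : ∀ α ∈ R, (∀ β ∈ R, ⟪α, α⟫ ≤ ⟪β, β⟫) → ⟪α, α⟫ = 2
  hishort_pos : hishort ∈ pos
  hishort_short : ⟪hishort, hishort⟫ = 2
  hishort_high : ∀ α ∈ R, ⟪α, α⟫ = 2 →
      ∃ f : Fin n → ℕ, hishort - α = ∑ i, (f i : ℝ) • simple i
  hiroot_pos : hiroot ∈ pos
  hiroot_high : ∀ α ∈ R, ∃ f : Fin n → ℕ, hiroot - α = ∑ i, (f i : ℝ) • simple i

namespace RootCtx

variable {n : ℕ} (c : RootCtx n)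

/-- word in the simple reflections of W; the letters are listed in the order of
application (the first letter of the list acts first), so `[i₁, …, i_l]`
represents s_{i_l} ⋯ s_{i_1}. -/
def wWord (L : List (Fin n)) : EV n → EV n :=
  L.foldl (fun f i => srefl (c.simple i) ∘ f) id

/-- membership in the Weyl group W. -/
def IsWeyl (w : EV n → EV n) : Prop := ∃ L : List (Fin n), w = c.wWord L

/-- λ(w) = {α ∈ R₊ : w(α) ∈ R₋}. -/
def lamW (w : EV n → EV n) : Finset (EV n) :=
  c.pos.filter (fun α => -(w α) ∈ c.pos)

/-- λ_ν(w). -/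
def lamWnu (w : EV n → EV n) (ν : ℝ) : Finset (EV n) :=
  (c.lamW w).filter (fun α => nuu α = ν)

/-- the length l(w) = |λ(w)| of w ∈ W. -/
def lenW (w : EV n → EV n) : ℕ := (c.lamW w).card

/-- ρ_ν = (1/2) Σ_{α ∈ R₊, ν_α = ν} α. -/
def rho (ν : ℝ) : EV n :=
  (1 / 2 : ℝ) • ∑ α ∈ c.pos.filter (fun α => nuu α = ν), α

/-- ρ_ν^∨ = ρ_ν / ν. -/
def rhoCheck (ν : ℝ) : EV n := ν⁻¹ • c.rho ν

/-- the affine root system R̃ ⊂ ℝⁿ × ℝ. -/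
def aR : Set (EV n × ℝ) := {p | ∃ α ∈ c.R, ∃ j : ℤ, p = (α, nuu α * j)}

/-- positive affine roots. -/
def aPos : Set (EV n × ℝ) :=
  {p | p ∈ c.aR ∧ (0 < p.2 ∨ (p.2 = 0 ∧ p.1 ∈ c.pos))}

/-- negative affine roots. -/
def aNeg : Set (EV n × ℝ) := {p | -p ∈ c.aPos}

/-- the affine simple roots α_0, α_1, …, α_n; the index 0 corresponds to
α₀ = [−ϑ, 1]. -/
def asimple : Fin (n + 1) → EV n × ℝ :=
  fun i => if h : i = 0 then (-c.hishort, (1 : ℝ)) else (c.simple (i.pred h), (0 : ℝ))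

/-- the affine simple reflections s_0, s_1, …, s_n. -/
def aS (i : Fin (n + 1)) : EV n × ℝ → EV n × ℝ := aRefl (c.asimple i)

/-- word in the affine simple reflections (letters in order of application). -/
def affWord (L : List (Fin (n + 1))) : EV n × ℝ → EV n × ℝ :=
  L.foldl (fun f i => c.aS i ∘ f) id

/-- the weight lattice P. -/
def PwSet : Set (EV n) :=
  {b | ∀ i, ∃ m : ℤ, 2 * ⟪b, c.simple i⟫ / ⟪c.simple i, c.simple i⟫ = (m : ℝ)}

/-- the dominant weights P₊. -/
def PplusSet : Set (EV n) :=
  {b | b ∈ c.PwSet ∧ ∀ i, 0 ≤ ⟪b, c.simple i⟫}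

/-- membership in the extended affine Weyl group Ŵ = W ⋉ P,
via the normal form w·b' with w ∈ W and b ∈ P. -/
def IsExtW (f : EV n × ℝ → EV n × ℝ) : Prop :=
  ∃ w b, c.IsWeyl w ∧ b ∈ c.PwSet ∧ f = affExt w ∘ transl b

/-- membership in Π = {π ∈ Ŵ : π(R̃₊) = R̃₊}. -/
def IsPi (f : EV n × ℝ → EV n × ℝ) : Prop :=
  c.IsExtW f ∧ f '' c.aPos = c.aPos

/-- the λ-set λ(ŵ) = R̃₊ ∩ ŵ⁻¹(R̃₋) of an affine transformation. -/
def aLam (f : EV n × ℝ → EV n × ℝ) : Set (EV n × ℝ) :=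
  {p | p ∈ c.aPos ∧ f p ∈ c.aNeg}

/-- the ν-part λ_ν(ŵ). -/
def aLamNu (f : EV n × ℝ → EV n × ℝ) (ν : ℝ) : Set (EV n × ℝ) :=
  {p | p ∈ c.aLam f ∧ nuu p.1 = ν}

/-- the length l(ŵ) = |λ(ŵ)|. -/
def aLen (f : EV n × ℝ → EV n × ℝ) : ℕ := (c.aLam f).ncard

/-- `(π, L)` is a reduced decomposition ŵ = π_r s_{i_l} ⋯ s_{i_1}: π ∈ Π and
the word length is minimal among all such presentations of the same element. -/
def IsReducedA (π : EV n × ℝ → EV n × ℝ) (L : List (Fin (n + 1))) : Prop :=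
  c.IsPi π ∧
    ∀ (π' : EV n × ℝ → EV n × ℝ) (L' : List (Fin (n + 1))),
      c.IsPi π' → π' ∘ c.affWord L' = π ∘ c.affWord L → L.length ≤ L'.length

/-- the λ-sequence α̃¹, α̃², … of a word (0-based indexing):
α̃^{k+1} = s_{i_1} s_{i_2} ⋯ s_{i_k}(α_{i_{k+1}}). -/
def lamSeq (L : List (Fin (n + 1))) (k : Fin L.length) : EV n × ℝ :=
  ((L.take k).foldr (fun i f => c.aS i ∘ f) id) (c.asimple (L.get k))

/-- the λ-sequence of a word in W (0-based indexing). -/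
def lamSeqW (L : List (Fin n)) (k : Fin L.length) : EV n :=
  ((L.take k).foldr (fun i f => srefl (c.simple i) ∘ f) id) (c.simple (L.get k))

end RootCtx


/-!
The affine reflection `s_α̃` acts by `[β, x] ↦ [s_α β, x - (α,β) j]` and the translation `jα` by
`[β, x] ↦ [β, x - (α,β) j]`; both preserve `R̃`. Hence a positive affine root `[β, x]` lies in
either λ-set iff `x < (α,β) j`, or `x = (α,β) j` and the image root (`s_α β`, resp. `β`) is
negative. For `β = α` this reads `0 ≤ x ≤ 2 ν_α j`; for `β ≠ α` it forces `(α,β) > 0`, because an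
orthogonal positive root is fixed by `s_α`. The two λ-sets differ only on the boundary
`x = (α,β) j`, and there exactly by the roots `β ∈ λ(s_α)`.
-/

section Reflections

variable {n : ℕ}

lemma nuu_neg (β : EV n) : nuu (-β) = nuu β := by
  simp [nuu]

lemma srefl_neg (α β : EV n) : srefl α (-β) = -srefl α β := by
  simp only [srefl, inner_neg_left, mul_neg, neg_div, neg_smul]
  abel

lemma srefl_self {α : EV n} (hα : ⟪α, α⟫ ≠ 0) : srefl α α = -α := by
  rw [srefl, mul_div_assoc, div_self hα, mul_one, two_smul]
  abel

lemma srefl_of_inner_eq_zero {α β : EV n} (h : ⟪β, α⟫ = 0) : srefl α β = β := by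
  simp [srefl, h]

lemma inner_srefl_srefl {α : EV n} (hα : ⟪α, α⟫ ≠ 0) (β : EV n) :
    ⟪srefl α β, srefl α β⟫ = ⟪β, β⟫ := by
  simp only [srefl, inner_sub_sub_self, real_inner_smul_left, real_inner_smul_right,
    real_inner_comm α β]
  field_simp
  ring

lemma nuu_srefl {α : EV n} (hα : ⟪α, α⟫ ≠ 0) (β : EV n) : nuu (srefl α β) = nuu β := by
  rw [nuu, inner_srefl_srefl hα, nuu]

lemma aRefl_apply {α : EV n} (hα : ⟪α, α⟫ ≠ 0) (t : ℝ) (z : EV n × ℝ) :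
    aRefl (α, nuu α * t) z = (srefl α z.1, z.2 - ⟪z.1, α⟫ * t) := by
  ext
  · simp [aRefl, srefl]
  · simp only [aRefl, nuu, Prod.snd_sub, Prod.smul_snd, smul_eq_mul]
    field_simp

lemma transl_smul_apply (t : ℝ) (α : EV n) (z : EV n × ℝ) :
    transl (t • α) z = (z.1, z.2 - ⟪z.1, α⟫ * t) := by
  simp [transl, real_inner_smul_right, mul_comm]

end Reflections

namespace RootCtx

variable {n : ℕ} (c : RootCtx n)

lemma inner_self_pos {β : EV n} (hβ : β ∈ c.R) : 0 < ⟪β, β⟫ :=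
  real_inner_self_pos.mpr (c.nonzero β hβ)

lemma nuu_pos {β : EV n} (hβ : β ∈ c.R) : 0 < nuu β :=
  half_pos (c.inner_self_pos hβ)

lemma exists_inner_eq_nuu_mul_int {β γ : EV n} (hβ : β ∈ c.R) (hγ : γ ∈ c.R) :
    ∃ m : ℤ, ⟪γ, β⟫ = nuu β * m := by
  obtain ⟨m, hm⟩ := c.crys β hβ γ hγ
  refine ⟨m, ?_⟩
  rw [div_eq_iff (c.inner_self_pos hβ).ne'] at hm
  rw [nuu]
  linarith

lemma srefl_mem {α β : EV n} (hα : α ∈ c.R) (hβ : β ∈ c.R) : srefl α β ∈ c.R :=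
  c.reflect_mem α hα β hβ

lemma notMem_pos_of_neg_mem_pos {β : EV n} (hβ : β ∈ c.R) (h : -β ∈ c.pos) : β ∉ c.pos :=
  fun hpos => (c.pos_iff β hβ).mp hpos h

lemma neg_mem_pos_of_notMem_pos {β : EV n} (hβ : β ∈ c.R) (h : β ∉ c.pos) : -β ∈ c.pos :=
  not_not.mp (mt (c.pos_iff β hβ).mpr h)

lemma linearIndependent_simple : LinearIndependent ℝ c.simple := by
  have hpos : ∀ δ ∈ c.pos, δ ∈ Submodule.span ℝ (Set.range c.simple) := by
    intro δ hδ
    obtain ⟨f, rfl⟩ := c.pos_sum δ hδ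
    exact Submodule.sum_mem _ fun i _ => Submodule.smul_mem _ _ (Submodule.subset_span ⟨i, rfl⟩)
  have hspan : ⊤ ≤ Submodule.span ℝ (Set.range c.simple) := by
    rw [← c.span_top, Submodule.span_le]
    intro γ hγ
    by_cases h : γ ∈ c.pos
    · exact hpos γ h
    · simpa using Submodule.neg_mem _ (hpos _ (c.neg_mem_pos_of_notMem_pos hγ h))
  exact linearIndependent_of_top_le_span_of_card_eq_finrank hspan (by simp)

lemma mem_pos_of_eq_sum_nat_smul {δ : EV n} (hδ : δ ∈ c.R) (f : Fin n → ℕ)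
    (hf : δ = ∑ i, (f i : ℝ) • c.simple i) : δ ∈ c.pos := by
  by_contra hnot
  obtain ⟨g, hg⟩ := c.pos_sum (-δ) (c.neg_mem_pos_of_notMem_pos hδ hnot)
  have hsum : ∑ i, ((f i + g i : ℕ) : ℝ) • c.simple i = 0 := by
    simp only [Nat.cast_add, add_smul, Finset.sum_add_distrib, ← hf, ← hg, add_neg_cancel]
  have hf0 : ∀ i, f i = 0 := fun i => by
    have := Fintype.linearIndependent_iff.mp c.linearIndependent_simple _ hsum i
    exact_mod_cast (Nat.eq_zero_of_add_eq_zero (by exact_mod_cast this)).1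
  exact c.nonzero δ hδ (by simp [hf, hf0])

lemma srefl_mem_pos_of_inner_nonpos {α β : EV n} (hα : α ∈ c.pos) (hβ : β ∈ c.pos)
    (h : ⟪β, α⟫ ≤ 0) : srefl α β ∈ c.pos := by
  have hαR := c.pos_subset hα
  obtain ⟨m, hm⟩ := c.crys α hαR β (c.pos_subset hβ)
  have hm0 : m ≤ 0 := by
    have : (m : ℝ) ≤ 0 := hm ▸ div_nonpos_of_nonpos_of_nonneg (by linarith)
      (c.inner_self_pos hαR).le
    exact_mod_cast this
  obtain ⟨f, hf⟩ := c.pos_sum β hβ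
  obtain ⟨g, hg⟩ := c.pos_sum α hα
  refine c.mem_pos_of_eq_sum_nat_smul (c.srefl_mem hαR (c.pos_subset hβ))
    (fun i => f i + m.natAbs * g i) ?_
  have hk : ((m.natAbs : ℕ) : ℝ) = -m := by
    rw [Nat.cast_natAbs, Int.cast_abs, abs_of_nonpos (by exact_mod_cast hm0)]
  rw [show srefl α β = β + (m.natAbs : ℝ) • α by rw [srefl, hm, hk, neg_smul, sub_eq_add_neg],
    hf, hg]
  simp only [Nat.cast_add, Nat.cast_mul, add_smul, mul_smul, Finset.sum_add_distrib,
    Finset.smul_sum]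

lemma inner_pos_of_mem_lamW_srefl {α β : EV n} (hα : α ∈ c.pos)
    (hβ : β ∈ c.lamW (srefl α)) : 0 < ⟪α, β⟫ := by
  obtain ⟨hβpos, hneg⟩ := Finset.mem_filter.mp hβ
  by_contra! h
  rw [real_inner_comm] at h
  exact c.notMem_pos_of_neg_mem_pos (c.srefl_mem (c.pos_subset hα) (c.pos_subset hβpos)) hneg
    (c.srefl_mem_pos_of_inner_nonpos hα hβpos h)

lemma neg_srefl_mem_pos_of_notMem_pos {α β : EV n} (hα : α ∈ c.pos) (hβ : β ∈ c.R)
    (hβpos : β ∉ c.pos) (h : 0 < ⟪α, β⟫) : -srefl α β ∈ c.pos := by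
  rw [← srefl_neg]
  refine c.srefl_mem_pos_of_inner_nonpos hα (c.neg_mem_pos_of_notMem_pos hβ hβpos) ?_
  rw [inner_neg_left, real_inner_comm]
  linarith

lemma neg_srefl_mem_pos_iff {α β : EV n} (hα : α ∈ c.pos) (hβ : β ∈ c.R)
    (h : 0 < ⟪α, β⟫) : -srefl α β ∈ c.pos ↔ β ∉ c.pos ∨ β ∈ c.lamW (srefl α) := by
  refine ⟨fun hneg => ?_, ?_⟩
  · by_cases hβpos : β ∈ c.pos
    · exact Or.inr (Finset.mem_filter.mpr ⟨hβpos, hneg⟩)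
    · exact Or.inl hβpos
  · rintro (hβpos | hlam)
    · exact c.neg_srefl_mem_pos_of_notMem_pos hα hβ hβpos h
    · exact (Finset.mem_filter.mp hlam).2

lemma neg_mem_aR {p : EV n × ℝ} (hp : p ∈ c.aR) : -p ∈ c.aR := by
  obtain ⟨β, hβ, k, rfl⟩ := hp
  exact ⟨-β, c.neg_mem β hβ, -k, by simp [nuu_neg]⟩

lemma fst_mem_of_mem_aR {p : EV n × ℝ} (hp : p ∈ c.aR) : p.1 ∈ c.R := by
  obtain ⟨β, hβ, k, rfl⟩ := hp
  exact hβ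

lemma nonneg_of_mem_aPos {p : EV n × ℝ} (hp : p ∈ c.aPos) : 0 ≤ p.2 :=
  hp.2.elim le_of_lt fun h => h.1.ge

lemma finite_aPos_le (B : EV n → ℝ) : {p | p ∈ c.aPos ∧ p.2 ≤ B p.1}.Finite := by
  refine (c.R.finite_toSet.biUnion fun β _ => (Set.finite_Icc (0 : ℤ) ⌈B β / nuu β⌉).image
    fun k : ℤ => (β, nuu β * k)).subset ?_
  rintro _ ⟨hpos, hB⟩
  obtain ⟨β, hβ, k, rfl⟩ := hpos.1
  have hν := c.nuu_pos hβ
  have h0 : (0 : ℝ) ≤ k := nonneg_of_mul_nonneg_right (c.nonneg_of_mem_aPos hpos) hν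
  have hk : (k : ℝ) ≤ B β / nuu β := by rw [le_div_iff₀ hν, mul_comm]; exact hB
  exact Set.mem_biUnion hβ ⟨k, ⟨by exact_mod_cast h0, Int.cast_le.mp (hk.trans (Int.le_ceil _))⟩,
    rfl⟩

lemma mem_aLam_iff_of_mapsTo {f : EV n × ℝ → EV n × ℝ} (hf : Set.MapsTo f c.aR c.aR)
    {p : EV n × ℝ} :
    p ∈ c.aLam f ↔ p ∈ c.aPos ∧ ((f p).2 < 0 ∨ ((f p).2 = 0 ∧ -(f p).1 ∈ c.pos)) := by
  simp only [aLam, aNeg, aPos, Set.mem_ofPred_eq, Prod.fst_neg, Prod.snd_neg, neg_pos,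
    neg_eq_zero]
  exact ⟨fun ⟨hp, _, h⟩ => ⟨hp, h⟩, fun ⟨hp, h⟩ => ⟨hp, c.neg_mem_aR (hf hp.1), h⟩⟩

lemma mapsTo_aRefl {α : EV n} (hα : α ∈ c.R) (j : ℤ) :
    Set.MapsTo (aRefl (α, nuu α * j)) c.aR c.aR := by
  rintro _ ⟨β, hβ, k, rfl⟩
  obtain ⟨m, hm⟩ := c.exists_inner_eq_nuu_mul_int hβ hα
  refine ⟨srefl α β, c.srefl_mem hα hβ, k - m * j, ?_⟩
  rw [aRefl_apply (c.inner_self_pos hα).ne', nuu_srefl (c.inner_self_pos hα).ne',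
    real_inner_comm, hm]
  push_cast
  ring_nf

lemma mapsTo_transl {α : EV n} (hα : α ∈ c.R) (j : ℤ) :
    Set.MapsTo (transl ((j : ℝ) • α)) c.aR c.aR := by
  rintro _ ⟨β, hβ, k, rfl⟩
  obtain ⟨m, hm⟩ := c.exists_inner_eq_nuu_mul_int hβ hα
  refine ⟨β, hβ, k - m * j, ?_⟩
  rw [transl_smul_apply, real_inner_comm, hm]
  push_cast
  ring_nf

lemma mem_aLam_aRefl_iff {α : EV n} (hα : α ∈ c.R) (j : ℤ) {p : EV n × ℝ} :
    p ∈ c.aLam (aRefl (α, nuu α * j)) ↔ p ∈ c.aPos ∧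
      (p.2 < ⟪α, p.1⟫ * j ∨ (p.2 = ⟪α, p.1⟫ * j ∧ -srefl α p.1 ∈ c.pos)) := by
  rw [c.mem_aLam_iff_of_mapsTo (c.mapsTo_aRefl hα j), aRefl_apply (c.inner_self_pos hα).ne',
    real_inner_comm α p.1, sub_neg, sub_eq_zero]

lemma mem_aLam_transl_iff {α : EV n} (hα : α ∈ c.R) (j : ℤ) {p : EV n × ℝ} :
    p ∈ c.aLam (transl ((j : ℝ) • α)) ↔ p ∈ c.aPos ∧
      (p.2 < ⟪α, p.1⟫ * j ∨ (p.2 = ⟪α, p.1⟫ * j ∧ -p.1 ∈ c.pos)) := by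
  rw [c.mem_aLam_iff_of_mapsTo (c.mapsTo_transl hα j), transl_smul_apply,
    real_inner_comm α p.1, sub_neg, sub_eq_zero]

lemma mk_inner_mul_mem_aPos {α β : EV n} (hα : α ∈ c.R) (hβ : β ∈ c.R) (hinner : 0 < ⟪α, β⟫)
    {j : ℤ} (hj : 0 < j) : (β, ⟪α, β⟫ * j) ∈ c.aPos := by
  obtain ⟨m, hm⟩ := c.exists_inner_eq_nuu_mul_int hβ hα
  exact ⟨⟨β, hβ, m * j, by rw [hm]; push_cast; ring_nf⟩,
    Or.inl (mul_pos hinner (by exact_mod_cast hj))⟩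

lemma mk_mem_aLam_aRefl_self_iff {α : EV n} (hα : α ∈ c.pos) (j k : ℤ) :
    (α, nuu α * k) ∈ c.aLam (aRefl (α, nuu α * j)) ↔ 0 ≤ k ∧ k ≤ 2 * j := by
  have hαR := c.pos_subset hα
  have hν := c.nuu_pos hαR
  have hαα : ⟪α, α⟫ = nuu α * 2 := by rw [nuu]; ring
  have hmem : (α, nuu α * k) ∈ c.aR := ⟨α, hαR, k, rfl⟩
  rw [c.mem_aLam_aRefl_iff hαR, srefl_self (c.inner_self_pos hαR).ne', neg_neg, hαα]
  simp only [aPos, Set.mem_ofPred_eq, hmem, hα, true_and, and_true, ← le_iff_lt_or_eq,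
    mul_assoc, mul_le_mul_iff_right₀ hν, mul_pos_iff_of_pos_left hν, mul_eq_zero, hν.ne',
    false_or]
  norm_cast
  omega

lemma inner_pos_of_mem_aLam_aRefl {α : EV n} (hα : α ∈ c.R) {j : ℤ} (hj : 0 < j)
    {p : EV n × ℝ} (hp : p ∈ c.aLam (aRefl (α, nuu α * j))) : 0 < ⟪α, p.1⟫ := by
  have hj' : (0 : ℝ) < j := by exact_mod_cast hj
  obtain ⟨hpos, hlt | ⟨heq, hneg⟩⟩ := (c.mem_aLam_aRefl_iff hα j).mp hp <;>
    have h0 := c.nonneg_of_mem_aPos hpos <;> by_contra! hle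
  · nlinarith
  · have hperp : ⟪p.1, α⟫ = 0 := by rw [real_inner_comm]; nlinarith
    have hp1 : p.1 ∈ c.pos := (hpos.2.resolve_left (by nlinarith)).2
    rw [srefl_of_inner_eq_zero hperp] at hneg
    exact c.notMem_pos_of_neg_mem_pos (c.pos_subset hp1) hneg hp1

lemma finite_aLamNu_aRefl {α : EV n} (hα : α ∈ c.R) (j : ℤ) (ν : ℝ) :
    (c.aLamNu (aRefl (α, nuu α * j)) ν).Finite := by
  refine (c.finite_aPos_le fun β => ⟪α, β⟫ * j).subset fun p ⟨hp, _⟩ => ?_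
  obtain ⟨hpos, h⟩ := (c.mem_aLam_aRefl_iff hα j).mp hp
  exact ⟨hpos, h.elim le_of_lt fun h => h.1.le⟩

lemma aLamNu_aRefl_eq_union {α : EV n} (hα : α ∈ c.pos) {j : ℤ} (hj : 0 < j) (ν : ℝ) :
    c.aLamNu (aRefl (α, nuu α * j)) ν = c.aLamNu (transl ((j : ℝ) • α)) ν ∪
      (fun β => (β, ⟪α, β⟫ * (j : ℝ))) '' c.lamWnu (srefl α) ν := by
  have hαR := c.pos_subset hα
  ext p
  simp only [aLamNu, Set.mem_union, Set.mem_ofPred_eq, Set.mem_image, Finset.mem_coe, lamWnu,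
    Finset.mem_filter]
  constructor
  · rintro ⟨hp, hν⟩
    obtain ⟨hpos, hlt | ⟨heq, hneg⟩⟩ := (c.mem_aLam_aRefl_iff hαR j).mp hp
    · exact Or.inl ⟨(c.mem_aLam_transl_iff hαR j).mpr ⟨hpos, Or.inl hlt⟩, hν⟩
    by_cases hp1 : p.1 ∈ c.pos
    · exact Or.inr ⟨p.1, ⟨Finset.mem_filter.mpr ⟨hp1, hneg⟩, hν⟩, Prod.ext rfl heq.symm⟩
    · have hneg' := c.neg_mem_pos_of_notMem_pos (c.fst_mem_of_mem_aR hpos.1) hp1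
      exact Or.inl ⟨(c.mem_aLam_transl_iff hαR j).mpr ⟨hpos, Or.inr ⟨heq, hneg'⟩⟩, hν⟩
  · rintro (⟨hp, hν⟩ | ⟨β, ⟨hβ, hν⟩, rfl⟩)
    · refine ⟨(c.mem_aLam_aRefl_iff hαR j).mpr ?_, hν⟩
      obtain ⟨hpos, hlt | ⟨heq, hneg⟩⟩ := (c.mem_aLam_transl_iff hαR j).mp hp
      · exact ⟨hpos, Or.inl hlt⟩
      have hp1R := c.fst_mem_of_mem_aR hpos.1
      have hp1 := c.notMem_pos_of_neg_mem_pos hp1R hneg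
      have h2 : 0 < p.2 := hpos.2.resolve_right fun h => hp1 h.2
      have hinner : 0 < ⟪α, p.1⟫ := by
        have hj' : (0 : ℝ) < j := by exact_mod_cast hj
        nlinarith
      exact ⟨hpos, Or.inr ⟨heq, c.neg_srefl_mem_pos_of_notMem_pos hα hp1R hp1 hinner⟩⟩
    · obtain ⟨hβpos, hneg⟩ := Finset.mem_filter.mp hβ
      have hinner := c.inner_pos_of_mem_lamW_srefl hα hβ
      exact ⟨(c.mem_aLam_aRefl_iff hαR j).mpr
        ⟨c.mk_inner_mul_mem_aPos hαR (c.pos_subset hβpos) hinner hj, Or.inr ⟨rfl, hneg⟩⟩, hν⟩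

lemma disjoint_aLamNu_transl_image_lamWnu {α : EV n} (hα : α ∈ c.R) (j : ℤ) (ν : ℝ) :
    Disjoint (c.aLamNu (transl ((j : ℝ) • α)) ν)
      ((fun β => (β, ⟪α, β⟫ * (j : ℝ))) '' c.lamWnu (srefl α) ν) := by
  refine Set.disjoint_left.mpr ?_
  rintro _ ⟨hp, -⟩ ⟨β, hβ, rfl⟩
  have hβpos := (Finset.mem_filter.mp (Finset.mem_filter.mp hβ).1).1
  obtain ⟨-, hlt | ⟨-, hneg⟩⟩ := (c.mem_aLam_transl_iff hα j).mp hp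
  · exact lt_irrefl _ hlt
  · exact c.notMem_pos_of_neg_mem_pos (c.pos_subset hβpos) hneg hβpos

lemma ncard_aLamNu_aRefl {α : EV n} (hα : α ∈ c.pos) {j : ℤ} (hj : 0 < j) (ν : ℝ) :
    (c.aLamNu (aRefl (α, nuu α * j)) ν).ncard =
      (c.aLamNu (transl ((j : ℝ) • α)) ν).ncard + (c.lamWnu (srefl α) ν).card := by
  have hfin := c.finite_aLamNu_aRefl (c.pos_subset hα) j ν
  rw [c.aLamNu_aRefl_eq_union hα hj ν] at hfin ⊢
  rw [Set.ncard_union_eq (c.disjoint_aLamNu_transl_image_lamWnu (c.pos_subset hα) j ν)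
    (hfin.subset Set.subset_union_left) (hfin.subset Set.subset_union_right),
    Set.ncard_image_of_injective _ fun β γ h => congrArg Prod.fst h, Set.ncard_coe_finset]

end RootCtx

open RootCtx in
theorem aLam_posroot_reflection_general {n : ℕ} (c : RootCtx n)
    (α : EV n) (hα : α ∈ c.pos) (j : ℤ) (hj : 0 < j)
    (ν : ℝ) :
    c.aLamNu (aRefl (α, nuu α * j)) ν =
      ({p : EV n × ℝ | nuu α = ν ∧ ∃ k : ℤ, 0 ≤ k ∧ k ≤ 2 * j ∧ p = (α, nuu α * k)} ∪
       {p : EV n × ℝ | p ∈ c.aPos ∧ p.1 ∈ c.R ∧ p.1 ≠ α ∧ nuu p.1 = ν ∧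
          0 < ⟪α, p.1⟫ ∧ 0 ≤ p.2 ∧ p.2 < ⟪α, p.1⟫ * j} ∪
       {p : EV n × ℝ | ∃ β ∈ c.R, β ≠ α ∧ nuu β = ν ∧ 0 < ⟪α, β⟫ ∧
          (β ∉ c.pos ∨ β ∈ c.lamW (srefl α)) ∧ p = (β, ⟪α, β⟫ * j)}) ∧
    (c.aLamNu (aRefl (α, nuu α * j)) ν).ncard
      = (c.aLamNu (transl ((j : ℝ) • α)) ν).ncard + (c.lamWnu (srefl α) ν).card := by
  refine ⟨?_, c.ncard_aLamNu_aRefl hα hj ν⟩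
  have hαR := c.pos_subset hα
  ext ⟨β, x⟩
  simp only [aLamNu, Set.mem_union, Set.mem_ofPred_eq, Prod.mk.injEq]
  constructor
  · rintro ⟨hp, rfl⟩
    have hβR : β ∈ c.R := c.fst_mem_of_mem_aR hp.1.1
    by_cases hβα : β = α
    · subst hβα
      obtain ⟨_, -, k, hk⟩ := hp.1.1
      obtain ⟨rfl, rfl⟩ := Prod.mk.inj hk
      obtain ⟨hk0, hk2⟩ := (c.mk_mem_aLam_aRefl_self_iff hα j k).mp hp
      exact Or.inl (Or.inl ⟨rfl, k, hk0, hk2, rfl, rfl⟩)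
    have hinner := c.inner_pos_of_mem_aLam_aRefl hαR hj hp
    obtain ⟨hpos, hlt | ⟨heq, hneg⟩⟩ := (c.mem_aLam_aRefl_iff hαR j).mp hp
    · exact Or.inl (Or.inr ⟨hpos, hβR, hβα, rfl, hinner, c.nonneg_of_mem_aPos hpos, hlt⟩)
    · exact Or.inr ⟨β, hβR, hβα, rfl, hinner, (c.neg_srefl_mem_pos_iff hα hβR hinner).mp hneg,
        rfl, heq⟩
  · rintro ((⟨hν, k, hk0, hk2, rfl, rfl⟩ | ⟨hpos, -, -, hν, -, -, hlt⟩) |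
      ⟨β, hβR, -, hν, hinner, hcond, rfl, rfl⟩)
    · exact ⟨(c.mk_mem_aLam_aRefl_self_iff hα j k).mpr ⟨hk0, hk2⟩, hν⟩
    · exact ⟨(c.mem_aLam_aRefl_iff hαR j).mpr ⟨hpos, Or.inl hlt⟩, hν⟩
    · exact ⟨(c.mem_aLam_aRefl_iff hαR j).mpr ⟨c.mk_inner_mul_mem_aPos hαR hβR hinner hj,
        Or.inr ⟨rfl, (c.neg_srefl_mem_pos_iff hα hβR hinner).mpr hcond⟩⟩, hν⟩

open RootCtx in
/-- Lemma 1.3 (ii).  For α ∈ R₊, j > 0 and α̃ = [α, ν_α j] ∈ R̃₊,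
the set λ_{ν_⋄}(s_α̃) is given explicitly by the union of three sets, and
consequently l_⋄(s_α̃) = l_⋄(jα) + l_⋄(s_α). -/
theorem aLam_posroot_reflection {n : ℕ} (c : RootCtx n)
    (α : EV n) (hα : α ∈ c.pos) (j : ℤ) (hj : 0 < j)
    (ν : ℝ) (hν : ∃ γ ∈ c.R, nuu γ = ν) :
    c.aLamNu (aRefl (α, nuu α * j)) ν =
      ({p : EV n × ℝ | nuu α = ν ∧ ∃ k : ℤ, 0 ≤ k ∧ k ≤ 2 * j ∧ p = (α, nuu α * k)} ∪
       {p : EV n × ℝ | p ∈ c.aPos ∧ p.1 ∈ c.R ∧ p.1 ≠ α ∧ nuu p.1 = ν ∧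
          0 < ⟪α, p.1⟫ ∧ 0 ≤ p.2 ∧ p.2 < ⟪α, p.1⟫ * j} ∪
       {p : EV n × ℝ | ∃ β ∈ c.R, β ≠ α ∧ nuu β = ν ∧ 0 < ⟪α, β⟫ ∧
          (β ∉ c.pos ∨ β ∈ c.lamW (srefl α)) ∧ p = (β, ⟪α, β⟫ * j)}) ∧
    (c.aLamNu (aRefl (α, nuu α * j)) ν).ncard
      = (c.aLamNu (transl ((j : ℝ) • α)) ν).ncard + (c.lamWnu (srefl α) ν).card :=
  aLam_posroot_reflection_general c α hα j hj ν
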